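/- arXiv:2011.06064 — 3 statements merged into one kernel-verified Lean document; each statement's English description precedes it below -/
import Mathlib

section
/- Let f be the Rastrigin function on ℝⁿ with parameters a_j, ξ_j > 0. Then for every θ ∈ ℝⁿ and σ > 0, the expectation of f under N(θ, σ²I) equals nσ² + ‖θ‖² − Σ_{j=1}^n a_j cos(ξ_j θ_j) exp(−(1/2)σ² ξ_j²). -/
open MeasureTheory Real
open scoped NNReal

/-!
Under `N(θ, σ²I)` the coordinates are independent `N(θ_j, σ²)`: the density factors as a product
of one-dimensional Gaussian densities. The Rastrigin function is a sum of functions of single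
coordinates, so by Fubini its expectation is the sum of one-dimensional expectations, and these
are `E X² = Var X + (E X)² = σ² + θ_j²` and `E cos (ξ X) = Re φ(ξ) = cos (ξ θ_j) exp (-σ²ξ²/2)`,
where `φ` is the characteristic function of `N(θ_j, σ²)`.
-/

namespace MeasureTheory

lemma integral_sum_mul_prod_eq_sum_integral {ι : Type*} [Fintype ι]
    {α : ι → Type*} {mα : ∀ i, MeasurableSpace (α i)} {μ : ∀ i, Measure (α i)}
    [∀ i, SigmaFinite (μ i)] {p h : ∀ i, α i → ℝ} (hp : ∀ i, Integrable (p i) (μ i))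
    (hp_one : ∀ i, ∫ t, p i t ∂μ i = 1) (hph : ∀ i, Integrable (fun t ↦ p i t * h i t) (μ i)) :
    ∫ x, (∑ i, h i (x i)) * ∏ i, p i (x i) ∂Measure.pi μ = ∑ i, ∫ t, p i t * h i t ∂μ i := by
  classical
  -- Each summand `h j (x j) * ∏ i, p i (x i)` is the product of the one-variable functions `q j`.
  set q : ι → ∀ i, α i → ℝ := fun j ↦ Function.update p j (fun t ↦ p j t * h j t)
  have h_split (x : ∀ i, α i) :
      (∑ i, h i (x i)) * ∏ i, p i (x i) = ∑ j, ∏ i, q j i (x i) := by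
    rw [Finset.sum_mul]
    refine Finset.sum_congr rfl fun j _ ↦ ?_
    simp only [q, Function.apply_update (fun i (g : α i → ℝ) ↦ g (x i)),
      Finset.prod_update_of_mem (Finset.mem_univ j),
      Finset.prod_eq_mul_prod_sdiff_singleton_of_mem (Finset.mem_univ j) (fun i ↦ p i (x i))]
    ring
  have h_int (j i) : Integrable (q j i) (μ i) := by
    rcases eq_or_ne i j with rfl | hij
    · simpa [q] using hph i
    · simpa [q, hij] using hp i
  have h_prod (j) : ∏ i, ∫ t, q j i t ∂μ i = ∫ t, p j t * h j t ∂μ j := by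
    simp only [q, Function.apply_update (fun i (g : α i → ℝ) ↦ ∫ t, g t ∂μ i),
      Finset.prod_update_of_mem (Finset.mem_univ j), hp_one, Finset.prod_const_one, mul_one]
  simp_rw [h_split]
  rw [integral_finsetSum _ fun j _ ↦ Integrable.fintype_prod_dep (h_int j)]
  simp_rw [integral_fintype_prod_eq_prod, h_prod]

end MeasureTheory

namespace ProbabilityTheory

variable {m : ℝ} {v : ℝ≥0}

lemma integrable_gaussianReal_iff_integrable_smul {E : Type*} [NormedAddCommGroup E]
    [NormedSpace ℝ E] {f : ℝ → E} (hv : v ≠ 0) :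
    Integrable f (gaussianReal m v) ↔ Integrable (fun x ↦ gaussianPDFReal m v x • f x) := by
  rw [gaussianReal_of_var_ne_zero _ hv, integrable_withDensity_iff_integrable_smul'
    (measurable_gaussianPDF m v) (ae_of_all _ fun _ ↦ gaussianPDF_lt_top)]
  simp only [toReal_gaussianPDF]

lemma integral_sq_gaussianReal : ∫ x, x ^ 2 ∂gaussianReal m v = v + m ^ 2 := by
  have h := variance_eq_sub (memLp_id_gaussianReal (μ := m) (v := v) 2)
  simp only [variance_id_gaussianReal, Pi.pow_apply, id, integral_id_gaussianReal] at h
  linarith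

lemma integrable_cos_mul_gaussianReal (c : ℝ) :
    Integrable (fun x ↦ cos (c * x)) (gaussianReal m v) :=
  (integrable_const (1 : ℝ)).mono' (by fun_prop) (ae_of_all _ fun x ↦ abs_cos_le_one _)

lemma integral_cos_mul_gaussianReal (c : ℝ) :
    ∫ x, cos (c * x) ∂gaussianReal m v = cos (c * m) * exp (-(v * c ^ 2 / 2)) := by
  have h_int : Integrable (fun x : ℝ ↦ Complex.exp (c * x * Complex.I)) (gaussianReal m v) := by
    refine (integrable_const (1 : ℝ)).mono' (by fun_prop) (ae_of_all _ fun x ↦ ?_)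
    rw [← Complex.ofReal_mul, Complex.norm_exp_ofReal_mul_I]
  have h_exponent : (c : ℂ) * m * Complex.I - v * c ^ 2 / 2
      = ((-(v * c ^ 2 / 2) : ℝ) : ℂ) + ((c * m : ℝ) : ℂ) * Complex.I := by
    push_cast; ring
  calc ∫ x, cos (c * x) ∂gaussianReal m v = (charFun (gaussianReal m v) c).re := by
        rw [charFun_apply_real, ← RCLike.re_eq_complex_re, ← integral_re h_int]
        simp only [RCLike.re_to_complex, ← Complex.ofReal_mul, Complex.exp_ofReal_mul_I_re]
    _ = cos (c * m) * exp (-(v * c ^ 2 / 2)) := by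
        rw [charFun_gaussianReal, h_exponent, Complex.exp_add, ← Complex.ofReal_exp,
          Complex.re_ofReal_mul, Complex.exp_ofReal_mul_I_re, mul_comm]

lemma integral_sq_sub_mul_cos_gaussianReal (A c : ℝ) :
    ∫ x, (x ^ 2 - A * cos (c * x)) ∂gaussianReal m v
      = v + m ^ 2 - A * (cos (c * m) * exp (-(v * c ^ 2 / 2))) := by
  have h_sq : Integrable (fun x : ℝ ↦ x ^ 2) (gaussianReal m v) :=
    (memLp_id_gaussianReal 2).integrable_sq
  rw [integral_sub h_sq ((integrable_cos_mul_gaussianReal c).const_mul A), integral_const_mul,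
    integral_sq_gaussianReal, integral_cos_mul_gaussianReal]

lemma prod_gaussianPDFReal_eq_rpow_mul_exp {ι : Type*} [Fintype ι] (θ x : EuclideanSpace ℝ ι) :
    ∏ i, gaussianPDFReal (θ i) v (x i)
      = (2 * π * v) ^ (-(Fintype.card ι : ℝ) / 2) * exp (-‖x - θ‖ ^ 2 / (2 * v)) := by
  simp only [gaussianPDFReal, Finset.prod_mul_distrib, Finset.prod_const, Finset.card_univ,
    ← exp_sum, EuclideanSpace.real_norm_sq_eq]
  congr 1
  · rw [sqrt_eq_rpow, ← rpow_neg (by positivity), ← rpow_natCast, ← rpow_mul (by positivity)]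
    ring_nf
  · simp [neg_div, Finset.sum_div]

end ProbabilityTheory

open ProbabilityTheory

theorem expectation_rastrigin_gaussian_general (n : ℕ) (a ξ : Fin n → ℝ)
    (θ : EuclideanSpace ℝ (Fin n)) (σ : ℝ) (hσ : 0 < σ) :
    (∫ x : EuclideanSpace ℝ (Fin n),
        (‖x‖ ^ 2 - ∑ j, a j * Real.cos (ξ j * x j)) *
          ((2 * π * σ ^ 2) ^ (-(n : ℝ) / 2) * Real.exp (-‖x - θ‖ ^ 2 / (2 * σ ^ 2))))
      = n * σ ^ 2 + ‖θ‖ ^ 2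
        - ∑ j, a j * Real.cos (ξ j * θ j) * Real.exp (-(1 / 2) * σ ^ 2 * ξ j ^ 2) := by
  set v : ℝ≥0 := ⟨σ ^ 2, sq_nonneg σ⟩
  have hv_coe : (v : ℝ) = σ ^ 2 := rfl
  have hv : v ≠ 0 := by rw [ne_eq, ← NNReal.coe_eq_zero, hv_coe]; positivity
  set h : Fin n → ℝ → ℝ := fun j t ↦ t ^ 2 - a j * cos (ξ j * t)
  have h_integrand (x : EuclideanSpace ℝ (Fin n)) :
      (‖x‖ ^ 2 - ∑ j, a j * cos (ξ j * x j)) *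
          ((2 * π * σ ^ 2) ^ (-(n : ℝ) / 2) * exp (-‖x - θ‖ ^ 2 / (2 * σ ^ 2)))
        = (∑ j, h j (x j)) * ∏ j, gaussianPDFReal (θ j) v (x j) := by
    rw [prod_gaussianPDFReal_eq_rpow_mul_exp, EuclideanSpace.real_norm_sq_eq,
      Finset.sum_sub_distrib, Fintype.card_fin, hv_coe]
  have h_coord (j : Fin n) : ∫ t, gaussianPDFReal (θ j) v t * h j t
      = σ ^ 2 + θ j ^ 2 - a j * cos (ξ j * θ j) * exp (-(1 / 2) * σ ^ 2 * ξ j ^ 2) := by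
    have h_law := integral_gaussianReal_eq_integral_smul (μ := θ j) (f := h j) hv
    simp only [smul_eq_mul] at h_law
    rw [← h_law, integral_sq_sub_mul_cos_gaussianReal, hv_coe]
    ring_nf
  calc _ = ∫ y : Fin n → ℝ, (∑ j, h j (y j)) * ∏ j, gaussianPDFReal (θ j) v (y j) := by
        simp_rw [h_integrand]
        exact ((PiLp.volume_preserving_toLp (Fin n)).integral_comp
          (MeasurableEquiv.toLp 2 (Fin n → ℝ)).measurableEmbedding _).symm
    _ = ∑ j, ∫ t, gaussianPDFReal (θ j) v t * h j t :=
        integral_sum_mul_prod_eq_sum_integral (fun j ↦ integrable_gaussianPDFReal _ _)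
          (fun j ↦ integral_gaussianPDFReal_eq_one _ hv) fun j ↦
            (integrable_gaussianReal_iff_integrable_smul hv).1
              ((memLp_id_gaussianReal 2).integrable_sq.sub
                ((integrable_cos_mul_gaussianReal _).const_mul _))
    _ = _ := by
        simp only [h_coord, Finset.sum_sub_distrib, Finset.sum_add_distrib,
          EuclideanSpace.real_norm_sq_eq θ, Finset.sum_const, Finset.card_univ, Fintype.card_fin,
          nsmul_eq_mul]

/-- The expectation of the Rastrigin function
`f(x) = ‖x‖² − Σ_j a_j cos(ξ_j x_j)` under the multivariate normal distribution
`N(θ, σ²I)` equals `nσ² + ‖θ‖² − Σ_j a_j cos(ξ_j θ_j) exp(−(1/2)σ²ξ_j²)`. -/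
theorem expectation_rastrigin_gaussian (n : ℕ) (a ξ : Fin n → ℝ)
    (ha : ∀ j, 0 < a j) (hξ : ∀ j, 0 < ξ j)
    (θ : EuclideanSpace ℝ (Fin n)) (σ : ℝ) (hσ : 0 < σ) :
    (∫ x : EuclideanSpace ℝ (Fin n),
        (‖x‖ ^ 2 - ∑ j, a j * Real.cos (ξ j * x j)) *
          ((2 * π * σ ^ 2) ^ (-(n : ℝ) / 2) * Real.exp (-‖x - θ‖ ^ 2 / (2 * σ ^ 2))))
      = n * σ ^ 2 + ‖θ‖ ^ 2
        - ∑ j, a j * Real.cos (ξ j * θ j) * Real.exp (-(1 / 2) * σ ^ 2 * ξ j ^ 2) :=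
  expectation_rastrigin_gaussian_general n a ξ θ σ hσ
end

section
/- (Consistency) Let (Ω, d) be a metric space with Borel σ-algebra, let (P_θ)_{θ∈Θ} be a family of probability measures on Ω, let f : Ω → ℝ be integrable with respect to every P_θ, let f have a unique global minimum at x* ∈ Ω (i.e. f(x*) < f(y) for all y ≠ x*), let f be continuous at x*, and assume (P_θ)_{θ∈Θ} is f-concentrated at x*. Then for every x ∈ Ω with x ≠ x* there exists θ* ∈ Θ such that ∫_Ω f dP_{θ*} < f(x). -/
open MeasureTheory

/-!
Let `c` lie strictly between `f x*` and `f x`. By continuity `f < c` on a ball around `x*`, so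
`∫ f dP - c = ∫ (f - c) dP` is at most the integral of `f - c` off the ball, which is bounded by
`(1 + |c|) ∫_{Ω ∖ ball} max{|f|, 1} dP`; concentration makes this smaller than `f x - c`.
-/

theorem integral_le_add_mul_setIntegral_compl {Ω : Type*} [MeasurableSpace Ω] {μ : Measure Ω}
    [IsProbabilityMeasure μ] {f : Ω → ℝ} (hf : Integrable f μ) {s : Set Ω}
    (hs : MeasurableSet s) {c : ℝ} (hfc : ∀ y ∈ s, f y ≤ c) :
    ∫ y, f y ∂μ ≤ c + (1 + |c|) * ∫ y in sᶜ, max |f y| 1 ∂μ := by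
  have hfc_int : Integrable (fun y => f y - c) μ := hf.sub (integrable_const c)
  have hmax_int : Integrable (fun y => (1 + |c|) * max |f y| 1) μ :=
    (hf.abs.sup (integrable_const 1)).const_mul _
  have h_on : ∫ y in s, (f y - c) ∂μ ≤ 0 :=
    setIntegral_nonpos hs fun y hy => sub_nonpos.mpr (hfc y hy)
  have h_off : ∫ y in sᶜ, (f y - c) ∂μ ≤ ∫ y in sᶜ, (1 + |c|) * max |f y| 1 ∂μ := by
    refine setIntegral_mono_on hfc_int.integrableOn hmax_int.integrableOn hs.compl fun y _ => ?_
    have h1 : 1 ≤ max |f y| 1 := le_max_right _ _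
    have hf_le : f y ≤ max |f y| 1 := (le_abs_self _).trans (le_max_left _ _)
    nlinarith [neg_abs_le c, abs_nonneg c]
  have h_split : ∫ y, (f y - c) ∂μ = ∫ y in s, (f y - c) ∂μ + ∫ y in sᶜ, (f y - c) ∂μ :=
    (integral_add_compl hs hfc_int).symm
  rw [integral_sub hf (integrable_const c), integral_const, probReal_univ, one_smul] at h_split
  rw [integral_const_mul] at h_off
  linarith

/-- Consistency: If `f` has a unique global minimum at `x*`, is continuous
there, and `(P_θ)` is `f`-concentrated at `x*`, then for every `x ≠ x*` some relaxation
value `∫ f dP_{θ*}` lies strictly below `f(x)`. -/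
theorem consistency {Ω : Type*} [MetricSpace Ω] [MeasurableSpace Ω] [BorelSpace Ω]
    {Θ : Type*} (P : Θ → Measure Ω) (hprob : ∀ θ, IsProbabilityMeasure (P θ))
    (f : Ω → ℝ) (hint : ∀ θ, Integrable f (P θ)) (xs : Ω)
    (hmin : ∀ y, y ≠ xs → f xs < f y)
    (hcont : ContinuousAt f xs)
    (hconc : ∀ ε > (0 : ℝ), ∀ δ > (0 : ℝ), ∃ θ,
      (∫ y in (Metric.ball xs δ)ᶜ, max |f y| 1 ∂(P θ)) < ε) :
    ∀ x, x ≠ xs → ∃ θ, (∫ y, f y ∂(P θ)) < f x := by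
  intro x hx
  set gap := (f x - f xs) / 2
  have hgap : 0 < gap := half_pos (sub_pos.mpr (hmin x hx))
  set c := f xs + gap
  obtain ⟨δ, hδ, hball⟩ := Metric.continuousAt_iff.mp hcont gap hgap
  have hfc : ∀ y ∈ Metric.ball xs δ, f y ≤ c := fun y hy => by
    linarith [(abs_lt.mp (hball hy)).2]
  have hc : 0 < 1 + |c| := by positivity
  obtain ⟨θ, hθ⟩ := hconc (gap / (1 + |c|)) (div_pos hgap hc) δ hδ
  have := hprob θ
  refine ⟨θ, (integral_le_add_mul_setIntegral_compl (hint θ)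
    Metric.isOpen_ball.measurableSet hfc).trans_lt ?_⟩
  calc c + (1 + |c|) * ∫ y in (Metric.ball xs δ)ᶜ, max |f y| 1 ∂(P θ)
      < c + (1 + |c|) * (gap / (1 + |c|)) := by gcongr
    _ = f x := by rw [mul_div_cancel₀ _ hc.ne']; ring
end

section
/- (Preserving strong convexity) Let P₀ be a probability measure on ℝⁿ (with Borel σ-algebra), and for θ ∈ ℝⁿ let P_θ(A) = P₀(A − θ) for all Borel sets A. Let f : ℝⁿ → ℝ be integrable with respect to every P_θ and m-strongly convex, i.e. for all v, w ∈ ℝⁿ and t ∈ [0,1], f(tv + (1−t)w) ≤ t f(v) + (1−t) f(w) − (1/2) m t(1−t)‖v−w‖². Then the relaxation F(θ) = ∫_{ℝⁿ} f dP_θ is m-strongly convex: F(tv + (1−t)w) ≤ t F(v) + (1−t) F(w) − (1/2) m t(1−t)‖v−w‖² for all v, w ∈ ℝⁿ and t ∈ [0,1]. -/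
open MeasureTheory Set

/-! Strong convexity is an inequality that holds pointwise, and integration against a probability
measure is monotone, linear and fixes constants, so it survives averaging. Since `∫ f d(P₀.map (· + θ))
= ∫ f (x + θ) dP₀(x)` and every translate `θ ↦ f (x + θ)` is `m`-strongly convex, the relaxation is
an average of `m`-strongly convex functions. -/

section

variable {E : Type*} [NormedAddCommGroup E] [NormedSpace ℝ E] {s : Set E} {φ : ℝ → ℝ}

lemma strongConvexOn_univ_iff {m : ℝ} {f : E → ℝ} :
    StrongConvexOn univ m f ↔ ∀ v w : E, ∀ t ∈ Icc (0 : ℝ) 1,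
      f (t • v + (1 - t) • w) ≤ t * f v + (1 - t) * f w - 1 / 2 * m * t * (1 - t) * ‖v - w‖ ^ 2 := by
  refine ⟨fun hf v w t ht => ?_, fun hf => ⟨convex_univ, fun v _ w _ a b ha hb hab => ?_⟩⟩
  · have h := hf.2 (mem_univ v) (mem_univ w) ht.1 (sub_nonneg.2 ht.2) (add_sub_cancel t 1)
    simp only [smul_eq_mul] at h
    linarith
  · obtain rfl : b = 1 - a := eq_sub_of_add_eq' hab
    have h := hf v w a ⟨ha, by linarith⟩
    simp only [smul_eq_mul]
    linarith

lemma UniformConvexOn.comp_add_left {f : E → ℝ} (hf : UniformConvexOn s φ f) (z : E) :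
    UniformConvexOn ((z + ·) ⁻¹' s) φ (fun x => f (z + x)) := by
  refine ⟨hf.1.translate_preimage_right z, fun x hx y hy a b ha hb hab => ?_⟩
  have h := hf.2 hx hy ha hb hab
  rwa [smul_add, smul_add, add_add_add_comm, Convex.combo_self hab, add_sub_add_left_eq_sub] at h

lemma UniformConvexOn.integral {α : Type*} [MeasurableSpace α] (μ : Measure α)
    [IsProbabilityMeasure μ] {g : α → E → ℝ} (hg : ∀ a, UniformConvexOn s φ (g a))
    (hint : ∀ x ∈ s, Integrable (fun a => g a x) μ) :
    UniformConvexOn s φ (fun x => ∫ a, g a x ∂μ) := by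
  have : Nonempty α := nonempty_of_isProbabilityMeasure μ
  refine ⟨(hg (Classical.arbitrary α)).1, fun x hx y hy a b ha hb hab => ?_⟩
  have hx' : Integrable (fun c => a • g c x) μ := (hint x hx).smul a
  have hy' : Integrable (fun c => b • g c y) μ := (hint y hy).smul b
  have hcomb : Integrable (fun c => a • g c x + b • g c y) μ := hx'.add hy'
  calc ∫ c, g c (a • x + b • y) ∂μ
      ≤ ∫ c, (a • g c x + b • g c y - a * b * φ ‖x - y‖) ∂μ :=
        integral_mono (hint _ ((hg (Classical.arbitrary α)).1 hx hy ha hb hab))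
          (hcomb.sub (integrable_const _)) fun c => (hg c).2 hx hy ha hb hab
    _ = a • ∫ c, g c x ∂μ + b • ∫ c, g c y ∂μ - a * b * φ ‖x - y‖ := by
        rw [integral_sub hcomb (integrable_const _), integral_add hx' hy', integral_smul, integral_smul, integral_const, probReal_univ,
          one_smul]

end

theorem preserving_strong_convexity_general (n : ℕ)
    (P₀ : Measure (EuclideanSpace ℝ (Fin n))) [IsProbabilityMeasure P₀]
    (f : EuclideanSpace ℝ (Fin n) → ℝ)
    (hint : ∀ θ : EuclideanSpace ℝ (Fin n), Integrable f (P₀.map (· + θ)))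
    (m : ℝ)
    (hconv : ∀ v w : EuclideanSpace ℝ (Fin n), ∀ t ∈ Set.Icc (0 : ℝ) 1,
      f (t • v + (1 - t) • w)
        ≤ t * f v + (1 - t) * f w - 1 / 2 * m * t * (1 - t) * ‖v - w‖ ^ 2) :
    ∀ v w : EuclideanSpace ℝ (Fin n), ∀ t ∈ Set.Icc (0 : ℝ) 1,
      (∫ x, f x ∂(P₀.map (· + (t • v + (1 - t) • w))))
        ≤ t * (∫ x, f x ∂(P₀.map (· + v))) + (1 - t) * (∫ x, f x ∂(P₀.map (· + w)))
          - 1 / 2 * m * t * (1 - t) * ‖v - w‖ ^ 2 := by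
  have hmap : ∀ θ, ∫ x, f x ∂(P₀.map (· + θ)) = ∫ x, f (x + θ) ∂P₀ := fun θ =>
    integral_map (measurable_add_const θ).aemeasurable (hint θ).aestronglyMeasurable
  have hF : StrongConvexOn univ m (fun θ => ∫ x, f (x + θ) ∂P₀) :=
    UniformConvexOn.integral P₀ (fun x => (strongConvexOn_univ_iff.2 hconv).comp_add_left x)
      fun θ _ => (hint θ).comp_aemeasurable (measurable_add_const θ).aemeasurable
  simpa only [hmap] using strongConvexOn_univ_iff.1 hF

/-- Preserving strong convexity: If `f` is `m`-strongly convex, then its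
relaxation `θ ↦ ∫ f dP_θ` with respect to the translated measures `P_θ = P₀(· − θ)` is
`m`-strongly convex as well. -/
theorem preserving_strong_convexity (n : ℕ)
    (P₀ : Measure (EuclideanSpace ℝ (Fin n))) [IsProbabilityMeasure P₀]
    (f : EuclideanSpace ℝ (Fin n) → ℝ)
    (hint : ∀ θ : EuclideanSpace ℝ (Fin n), Integrable f (P₀.map (· + θ)))
    (m : ℝ) (hm : 0 < m)
    (hconv : ∀ v w : EuclideanSpace ℝ (Fin n), ∀ t ∈ Set.Icc (0 : ℝ) 1,
      f (t • v + (1 - t) • w)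
        ≤ t * f v + (1 - t) * f w - 1 / 2 * m * t * (1 - t) * ‖v - w‖ ^ 2) :
    ∀ v w : EuclideanSpace ℝ (Fin n), ∀ t ∈ Set.Icc (0 : ℝ) 1,
      (∫ x, f x ∂(P₀.map (· + (t • v + (1 - t) • w))))
        ≤ t * (∫ x, f x ∂(P₀.map (· + v))) + (1 - t) * (∫ x, f x ∂(P₀.map (· + w)))
          - 1 / 2 * m * t * (1 - t) * ‖v - w‖ ^ 2 :=
  preserving_strong_convexity_general n P₀ f hint m hconv
end
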